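/- arXiv:1905.06467 — 3 statements merged into one kernel-verified Lean document; each statement's English description precedes it below -/
import Mathlib

section
/- Under the two-component mixture regression model, setting λ1 = p·β, η = λ1ᵀX, λ2 = 2·μ1, λ3 = 1/p, and α̃ = p·(μ1² + σ1²) + (1 − p)·(μ2² + σ2²), the conditional second moment admits the reparameterized form E[Y² | X] = α̃ + λ2·η + λ3·η² almost surely; moreover β = λ3·λ1, μ1 = λ2/2 and p = 1/λ3. -/
open MeasureTheory ProbabilityTheory Filter Matrix

/-- Under the two-component mixture regression model, setting
`λ1 = p·β`, `η = λ1ᵀX`, `λ2 = 2·μ1`, `λ3 = 1/p` and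
`α̃ = p·(μ1² + σ1²) + (1 − p)·(μ2² + σ2²)`, the conditional second moment admits the
reparameterized form `E[Y² | X] = α̃ + λ2·η + λ3·η²` almost surely; moreover
`β = λ3·λ1`, `μ1 = λ2/2` and `p = 1/λ3`. -/
theorem mixture_reparameterization
    {Ω : Type*} [MeasurableSpace Ω] (Pr : Measure Ω) [IsProbabilityMeasure Pr]
    {m : ℕ} (X : Ω → (Fin m → ℝ)) (Y1 Y2 P : Ω → ℝ)
    (hX : Measurable X) (hY1 : Measurable Y1) (hY2 : Measurable Y2) (hP : Measurable P)
    (p μ1 μ2 σ1sq σ2sq : ℝ) (β : Fin m → ℝ)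
    (hp : p ∈ Set.Ioo (0 : ℝ) 1) (hσ1 : 0 ≤ σ1sq)
    (hPvals : ∀ ω, P ω = 0 ∨ P ω = 1)
    (hPp : Pr {ω | P ω = 1} = ENNReal.ofReal p)
    (hindep : IndepFun P (fun ω => (X ω, Y1 ω, Y2 ω)) Pr)
    (hY2X : IndepFun Y2 X Pr)
    (hY1L2 : MemLp Y1 2 Pr) (hY2L2 : MemLp Y2 2 Pr)
    (hcondY1 : Pr[Y1 | MeasurableSpace.comap X inferInstance]
        =ᵐ[Pr] fun ω => μ1 + β ⬝ᵥ X ω)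
    (hcondY1sq : Pr[(fun ω => (Y1 ω) ^ 2) | MeasurableSpace.comap X inferInstance]
        =ᵐ[Pr] fun ω => (μ1 + β ⬝ᵥ X ω) ^ 2 + σ1sq)
    (hmeanY2 : ∫ ω, Y2 ω ∂Pr = μ2)
    (hmeanY2sq : ∫ ω, (Y2 ω) ^ 2 ∂Pr = μ2 ^ 2 + σ2sq)
    -- the reparameterization
    (lam1 : Fin m → ℝ) (lam2 lam3 alphaTilde : ℝ)
    (hlam1 : lam1 = p • β) (hlam2 : lam2 = 2 * μ1) (hlam3 : lam3 = 1 / p)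
    (halpha : alphaTilde = p * (μ1 ^ 2 + σ1sq) + (1 - p) * (μ2 ^ 2 + σ2sq)) :
    (Pr[(fun ω => (P ω * Y1 ω + (1 - P ω) * Y2 ω) ^ 2) | MeasurableSpace.comap X inferInstance]
        =ᵐ[Pr] fun ω => alphaTilde + lam2 * (lam1 ⬝ᵥ X ω) + lam3 * (lam1 ⬝ᵥ X ω) ^ 2)
      ∧ β = lam3 • lam1 ∧ μ1 = lam2 / 2 ∧ p = 1 / lam3 := by
  obtain ⟨hp0, hp1⟩ := hp
  have hp0' : p ≠ 0 := ne_of_gt hp0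
  have hm : MeasurableSpace.comap X inferInstance ≤ _ := hX.comap_le
  set c2 : ℝ := (1 - p) * (μ2 ^ 2 + σ2sq) with hc2
  -- P is an indicator
  have hPset : MeasurableSet {ω | P ω = 1} := hP (measurableSet_singleton 1)
  have hPind : P = Set.indicator {ω | P ω = 1} (fun _ => (1 : ℝ)) := by
    funext ω
    rcases hPvals ω with h | h
    · have : ω ∉ {ω | P ω = 1} := by simp [h]
      simp [Set.indicator_of_notMem this, h]
    · have : ω ∈ {ω | P ω = 1} := h
      simp [Set.indicator_of_mem this, h]
  have hintP : Integrable P Pr := by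
    rw [hPind]; exact (integrable_const (1 : ℝ)).indicator hPset
  have hEP : ∫ ω, P ω ∂Pr = p := by
    conv_lhs => rw [hPind]
    rw [integral_indicator hPset]
    simp [measureReal_def, hPp, ENNReal.toReal_ofReal hp0.le]
  have hint1P : Integrable (fun ω => 1 - P ω) Pr := (integrable_const 1).sub hintP
  have hE1P : ∫ ω, (1 - P ω) ∂Pr = 1 - p := by
    rw [integral_sub (integrable_const 1) hintP]; simp [hEP]
  -- integrability of squares
  have hY1sq : Integrable (fun ω => Y1 ω ^ 2) Pr := hY1L2.integrable_sq
  have hY2sq : Integrable (fun ω => Y2 ω ^ 2) Pr := hY2L2.integrable_sq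
  have hPbd : ∀ ω, ‖P ω‖ ≤ 1 := fun ω => by rcases hPvals ω with h | h <;> simp [h]
  have h1Pbd : ∀ ω, ‖1 - P ω‖ ≤ 1 := fun ω => by rcases hPvals ω with h | h <;> simp [h]
  have hf1 : Integrable (fun ω => P ω * Y1 ω ^ 2) Pr :=
    hY1sq.bdd_mul hP.aestronglyMeasurable (ae_of_all _ hPbd)
  have hf2 : Integrable (fun ω => (1 - P ω) * Y2 ω ^ 2) Pr :=
    hY2sq.bdd_mul (measurable_const.sub hP).aestronglyMeasurable (ae_of_all _ h1Pbd)
  have hf : Integrable (fun ω => P ω * Y1 ω ^ 2 + (1 - P ω) * Y2 ω ^ 2) Pr := hf1.add hf2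
  -- conditional moment function is integrable (it equals a condexp a.e.)
  have hq : Integrable (fun ω => (μ1 + β ⬝ᵥ X ω) ^ 2 + σ1sq) Pr :=
    integrable_condExp.congr hcondY1sq
  -- the candidate conditional expectation
  set g : Ω → ℝ := fun ω => p * ((μ1 + β ⬝ᵥ X ω) ^ 2 + σ1sq) + c2 with hgdef
  have hgint : Integrable g Pr := (hq.const_mul p).add (integrable_const c2)
  have hdotm : Measurable fun v : Fin m → ℝ => β ⬝ᵥ v := by
    simp only [dotProduct]
    exact Finset.measurable_sum _ fun i _ => (measurable_pi_apply i).const_mul _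
  have hFmeas : Measurable fun v : Fin m → ℝ => p * ((μ1 + β ⬝ᵥ v) ^ 2 + σ1sq) + c2 :=
    ((((measurable_const.add hdotm).pow_const 2).add measurable_const).const_mul p).add
      measurable_const
  have hXm' : Measurable[MeasurableSpace.comap X inferInstance] X := comap_measurable X
  have hgmeas : StronglyMeasurable[MeasurableSpace.comap X inferInstance] g :=
    (hFmeas.comp hXm').stronglyMeasurable
  -- the key set-integral identity
  have hkey : ∀ s : Set Ω, MeasurableSet[MeasurableSpace.comap X inferInstance] s →
      ∫ ω in s, g ω ∂Pr = ∫ ω in s, (P ω * Y1 ω ^ 2 + (1 - P ω) * Y2 ω ^ 2) ∂Pr := by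
    rintro s ⟨A, hA, rfl⟩
    have hsX : MeasurableSet (X ⁻¹' A) := hX hA
    have hsm : MeasurableSet[MeasurableSpace.comap X inferInstance] (X ⁻¹' A) := ⟨A, hA, rfl⟩
    -- indicator rewriting
    have hrw1 : (fun ω => Set.indicator A (fun _ => (1 : ℝ)) (X ω) * Y1 ω ^ 2)
        = (X ⁻¹' A).indicator (fun ω => Y1 ω ^ 2) := by
      funext ω; by_cases hω : X ω ∈ A <;> simp [hω]
    have hrw2 : (fun ω => Set.indicator A (fun _ => (1 : ℝ)) (X ω) * Y2 ω ^ 2)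
        = (X ⁻¹' A).indicator (fun ω => Y2 ω ^ 2) := by
      funext ω; by_cases hω : X ω ∈ A <;> simp [hω]
    have hφ1 : Measurable fun q : (Fin m → ℝ) × ℝ × ℝ =>
        Set.indicator A (fun _ => (1 : ℝ)) q.1 * q.2.1 ^ 2 :=
      ((measurable_const.indicator hA).comp measurable_fst).mul
        ((measurable_fst.comp measurable_snd).pow_const 2)
    have hφ2 : Measurable fun q : (Fin m → ℝ) × ℝ × ℝ =>
        Set.indicator A (fun _ => (1 : ℝ)) q.1 * q.2.2 ^ 2 :=
      ((measurable_const.indicator hA).comp measurable_fst).mul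
        ((measurable_snd.comp measurable_snd).pow_const 2)
    have hind1 : Integrable ((X ⁻¹' A).indicator (fun ω => Y1 ω ^ 2)) Pr := hY1sq.indicator hsX
    have hind2 : Integrable ((X ⁻¹' A).indicator (fun ω => Y2 ω ^ 2)) Pr := hY2sq.indicator hsX
    -- E[P · 1_A(X) Y1²] = p ∫_s Y1²
    have e1 : ∫ ω in X ⁻¹' A, P ω * Y1 ω ^ 2 ∂Pr = p * ∫ ω in X ⁻¹' A, Y1 ω ^ 2 ∂Pr := by
      have hIP : IndepFun P ((X ⁻¹' A).indicator (fun ω => Y1 ω ^ 2)) Pr := by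
        have := hindep.comp measurable_id hφ1
        rwa [show (fun q : (Fin m → ℝ) × ℝ × ℝ =>
          Set.indicator A (fun _ => (1 : ℝ)) q.1 * q.2.1 ^ 2) ∘
            (fun ω => (X ω, Y1 ω, Y2 ω)) = (X ⁻¹' A).indicator (fun ω => Y1 ω ^ 2) from
          hrw1 ▸ rfl] at this
      have h := hIP.integral_mul_eq_mul_integral hintP.aestronglyMeasurable hind1.aestronglyMeasurable
      have hL : ∫ ω, (P * (X ⁻¹' A).indicator (fun ω => Y1 ω ^ 2)) ω ∂Pr
          = ∫ ω in X ⁻¹' A, P ω * Y1 ω ^ 2 ∂Pr := by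
        rw [← integral_indicator hsX]
        congr 1
        funext ω
        by_cases hω : ω ∈ X ⁻¹' A <;> simp [hω]
      rw [hL] at h
      rw [h, hEP, integral_indicator hsX]
    -- E[(1-P) · 1_A(X) Y2²] = (1-p) ∫_s Y2²
    have e2 : ∫ ω in X ⁻¹' A, (1 - P ω) * Y2 ω ^ 2 ∂Pr
        = (1 - p) * ∫ ω in X ⁻¹' A, Y2 ω ^ 2 ∂Pr := by
      have hIP : IndepFun (fun ω => 1 - P ω) ((X ⁻¹' A).indicator (fun ω => Y2 ω ^ 2)) Pr := by
        have := hindep.comp (show Measurable fun r : ℝ => 1 - r from measurable_const.sub measurable_id) hφ2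
        rwa [show (fun q : (Fin m → ℝ) × ℝ × ℝ =>
          Set.indicator A (fun _ => (1 : ℝ)) q.1 * q.2.2 ^ 2) ∘
            (fun ω => (X ω, Y1 ω, Y2 ω)) = (X ⁻¹' A).indicator (fun ω => Y2 ω ^ 2) from
          hrw2 ▸ rfl] at this
      have h := hIP.integral_mul_eq_mul_integral hint1P.aestronglyMeasurable hind2.aestronglyMeasurable
      have hL : ∫ ω, ((fun ω => 1 - P ω) * (X ⁻¹' A).indicator (fun ω => Y2 ω ^ 2)) ω ∂Pr
          = ∫ ω in X ⁻¹' A, (1 - P ω) * Y2 ω ^ 2 ∂Pr := by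
        rw [← integral_indicator hsX]
        congr 1
        funext ω
        by_cases hω : ω ∈ X ⁻¹' A <;> simp [hω]
      rw [hL] at h
      rw [h, hE1P, integral_indicator hsX]
    -- ∫_s Y2² = (μ2²+σ2²)·Pr(s)
    have e3 : ∫ ω in X ⁻¹' A, Y2 ω ^ 2 ∂Pr = (μ2 ^ 2 + σ2sq) * (Pr (X ⁻¹' A)).toReal := by
      have hIP : IndepFun (fun ω => Y2 ω ^ 2)
          (fun ω => Set.indicator A (fun _ => (1 : ℝ)) (X ω)) Pr :=
        hY2X.comp (measurable_id.pow_const 2) (measurable_const.indicator hA)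
      have hindint : Integrable (fun ω => Set.indicator A (fun _ => (1 : ℝ)) (X ω)) Pr := by
        have : (fun ω => Set.indicator A (fun _ => (1 : ℝ)) (X ω))
            = (X ⁻¹' A).indicator (fun _ => (1 : ℝ)) := by
          funext ω; by_cases hω : X ω ∈ A <;> simp [hω]
        rw [this]; exact (integrable_const (1 : ℝ)).indicator hsX
      have h := hIP.integral_mul_eq_mul_integral hY2sq.aestronglyMeasurable hindint.aestronglyMeasurable
      have hL : ∫ ω, ((fun ω => Y2 ω ^ 2) *
          (fun ω => Set.indicator A (fun _ => (1 : ℝ)) (X ω))) ω ∂Pr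
          = ∫ ω in X ⁻¹' A, Y2 ω ^ 2 ∂Pr := by
        rw [← integral_indicator hsX]
        congr 1
        funext ω
        by_cases hω : X ω ∈ A <;> simp [hω, Set.mem_preimage]
      have hR : ∫ ω, Set.indicator A (fun _ => (1 : ℝ)) (X ω) ∂Pr = (Pr (X ⁻¹' A)).toReal := by
        have : (fun ω => Set.indicator A (fun _ => (1 : ℝ)) (X ω))
            = (X ⁻¹' A).indicator (fun _ => (1 : ℝ)) := by
          funext ω; by_cases hω : X ω ∈ A <;> simp [hω]
        rw [this, integral_indicator hsX]
        simp [measureReal_def]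
      rw [hL] at h
      rw [h, hmeanY2sq, hR]
    -- ∫_s Y1² = ∫_s ((μ1+β·X)² + σ1²)
    have e4 : ∫ ω in X ⁻¹' A, Y1 ω ^ 2 ∂Pr
        = ∫ ω in X ⁻¹' A, ((μ1 + β ⬝ᵥ X ω) ^ 2 + σ1sq) ∂Pr := by
      rw [← setIntegral_condExp hm hY1sq hsm]
      exact integral_congr_ae (ae_restrict_of_ae hcondY1sq)
    -- combine
    rw [integral_add (hf1.integrableOn) (hf2.integrableOn), e1, e2, e3, e4]
    rw [hgdef]
    rw [integral_add ((hq.const_mul p).integrableOn) (integrable_const c2).integrableOn,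
      integral_const_mul, setIntegral_const]
    simp only [smul_eq_mul, hc2, measureReal_def]
    ring
  -- identify the condexp
  have hmain : g =ᵐ[Pr]
      Pr[(fun ω => P ω * Y1 ω ^ 2 + (1 - P ω) * Y2 ω ^ 2) |
        MeasurableSpace.comap X inferInstance] :=
    ae_eq_condExp_of_forall_setIntegral_eq hm hf
      (fun s _ _ => hgint.integrableOn) (fun s hs _ => hkey s hs)
      hgmeas.aestronglyMeasurable
  -- Y² = P Y1² + (1-P) Y2²
  have hYsq : (fun ω => (P ω * Y1 ω + (1 - P ω) * Y2 ω) ^ 2)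
      = fun ω => P ω * Y1 ω ^ 2 + (1 - P ω) * Y2 ω ^ 2 := by
    funext ω
    rcases hPvals ω with h | h <;> rw [h] <;> ring
  -- the target function equals g
  have htarget : (fun ω => alphaTilde + lam2 * (lam1 ⬝ᵥ X ω) + lam3 * (lam1 ⬝ᵥ X ω) ^ 2) = g := by
    funext ω
    rw [hgdef, hlam1, hlam2, hlam3, halpha, smul_dotProduct]
    simp only [smul_eq_mul, hc2]
    field_simp
    ring
  refine ⟨?_, ?_, ?_, ?_⟩
  · rw [hYsq, htarget]
    exact hmain.symm
  · rw [hlam1, hlam3, smul_smul, one_div, inv_mul_cancel₀ hp0', one_smul]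
  · rw [hlam2]; ring
  · rw [hlam3, one_div_one_div]
end

section
/- Under the two-component mixture regression model, the population least-squares regression coefficient vector of Y on X (with intercept) equals λ1 = p·β; that is, with X̃ = (1, Xᵀ)ᵀ ∈ ℝ^{m+1} and A(m) the m×(m+1) matrix projecting an (m+1)-vector onto its last m components, if E[X̃X̃ᵀ] is invertible then A(m)·E[X̃X̃ᵀ]⁻¹·E[X̃Y] = p·β. -/
open MeasureTheory ProbabilityTheory Filter Matrix

lemma aux_mul_integrable {Ω : Type*} [MeasurableSpace Ω] {Pr : Measure Ω} {f g : Ω → ℝ}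
    (hf : MemLp f 2 Pr) (hg : MemLp g 2 Pr) : Integrable (fun ω => f ω * g ω) Pr := by
  have h : MemLp (f • g) 1 Pr := hg.smul hf
  exact memLp_one_iff_integrable.mp h

lemma aux_cons_meas {m : ℕ} (j : Fin (m + 1)) :
    Measurable (fun x : Fin m → ℝ => (Fin.cons (1 : ℝ) x : Fin (m + 1) → ℝ) j) := by
  refine Fin.cases (motive := fun j =>
      Measurable fun x : Fin m → ℝ => (Fin.cons (1 : ℝ) x : Fin (m + 1) → ℝ) j) ?_ ?_ j
  · simp only [Fin.cons_zero]; exact measurable_const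
  · intro i; simp only [Fin.cons_succ]; exact measurable_pi_apply i

/-- Under the two-component mixture regression model, the population
least-squares regression coefficient vector of `Y` on `X` (with intercept) equals
`λ1 = p·β`: with `X̃ = (1, Xᵀ)ᵀ` and `A(m)` the `m×(m+1)` matrix projecting an
`(m+1)`-vector onto its last `m` components, if `E[X̃X̃ᵀ]` is invertible then
`A(m)·E[X̃X̃ᵀ]⁻¹·E[X̃Y] = p·β`. -/
theorem mixture_population_least_squares
    {Ω : Type*} [MeasurableSpace Ω] (Pr : Measure Ω) [IsProbabilityMeasure Pr]
    {m : ℕ} (X : Ω → (Fin m → ℝ)) (Y1 Y2 P : Ω → ℝ)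
    (hX : Measurable X) (hY1 : Measurable Y1) (hY2 : Measurable Y2) (hP : Measurable P)
    (p μ1 μ2 : ℝ) (β : Fin m → ℝ)
    (hp : p ∈ Set.Ioo (0 : ℝ) 1)
    (hPvals : ∀ ω, P ω = 0 ∨ P ω = 1)
    (hPp : Pr {ω | P ω = 1} = ENNReal.ofReal p)
    (hindep : IndepFun P (fun ω => (X ω, Y1 ω, Y2 ω)) Pr)
    (hY2X : IndepFun Y2 X Pr)
    (hXL2 : MemLp X 2 Pr)
    (hY1int : Integrable Y1 Pr) (hY2int : Integrable Y2 Pr)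
    (hcondY1 : Pr[Y1 | MeasurableSpace.comap X inferInstance]
        =ᵐ[Pr] fun ω => μ1 + β ⬝ᵥ X ω)
    (hmeanY2 : ∫ ω, Y2 ω ∂Pr = μ2)
    -- the observed response, the extended design vector, the projection matrix and
    -- the population second-moment matrix
    (Y : Ω → ℝ) (hY : Y = fun ω => P ω * Y1 ω + (1 - P ω) * Y2 ω)
    (Xt : Ω → (Fin (m + 1) → ℝ)) (hXt : ∀ ω, Xt ω = Fin.cons 1 (X ω))
    (A : Matrix (Fin m) (Fin (m + 1)) ℝ)
    (hA : A = Matrix.of fun i j => if j = i.succ then (1 : ℝ) else 0)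
    (M : Matrix (Fin (m + 1)) (Fin (m + 1)) ℝ)
    (hM : M = Matrix.of fun i j => ∫ ω, Xt ω i * Xt ω j ∂Pr)
    (hXtY : ∀ j, Integrable (fun ω => Xt ω j * Y ω) Pr)
    (hMinv : IsUnit M.det) :
    A.mulVec (M⁻¹.mulVec fun j => ∫ ω, Xt ω j * Y ω ∂Pr) = p • β := by
  obtain ⟨hp0, hp1'⟩ := hp
  set c : ℝ := p * μ1 + (1 - p) * μ2 with hc
  set v : Fin (m + 1) → ℝ := Fin.cons c (p • β) with hv
  -- basic measurability / integrability facts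
  have hXi2 : ∀ i, MemLp (fun ω => X ω i) 2 Pr := fun i =>
    hXL2.of_le ((measurable_pi_apply i).comp hX).aestronglyMeasurable
      (Filter.Eventually.of_forall fun ω => norm_le_pi_norm (X ω) i)
  have hXtmeas : ∀ j, Measurable (fun ω => Xt ω j) := by
    intro j
    have : (fun ω => Xt ω j)
        = fun ω => (Fin.cons (1 : ℝ) (X ω) : Fin (m + 1) → ℝ) j :=
      funext fun ω => by rw [hXt]
    rw [this]; exact (aux_cons_meas j).comp hX
  have hXt2 : ∀ j, MemLp (fun ω => Xt ω j) 2 Pr := by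
    intro j
    have heq : (fun ω => Xt ω j)
        = fun ω => (Fin.cons (1 : ℝ) (X ω) : Fin (m + 1) → ℝ) j :=
      funext fun ω => by rw [hXt]
    rw [heq]
    refine Fin.cases (motive := fun j =>
      MemLp (fun ω => (Fin.cons (1 : ℝ) (X ω) : Fin (m + 1) → ℝ) j) 2 Pr) ?_ ?_ j
    · simp only [Fin.cons_zero]; exact memLp_const 1
    · intro i; simp only [Fin.cons_succ]; exact hXi2 i
  have hXtint : ∀ j, Integrable (fun ω => Xt ω j) Pr :=
    fun j => (hXt2 j).integrable one_le_two
  -- facts about P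
  have hPset : MeasurableSet {ω | P ω = 1} := hP (measurableSet_singleton 1)
  have hPind : P = Set.indicator {ω | P ω = 1} (fun _ => (1 : ℝ)) := by
    funext ω
    rcases hPvals ω with h | h <;> simp [Set.indicator_apply, h]
  have hPint : Integrable P Pr := by
    rw [hPind]; exact (integrable_const 1).indicator hPset
  have hEP : ∫ ω, P ω ∂Pr = p := by
    rw [hPind, integral_indicator_const _ hPset, measureReal_def, hPp, smul_eq_mul, mul_one,
      ENNReal.toReal_ofReal hp0.le]
  have h1Pint : Integrable (fun ω => 1 - P ω) Pr := (integrable_const 1).sub hPint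
  have hE1P : ∫ ω, (1 - P ω) ∂Pr = 1 - p := by
    rw [integral_sub (integrable_const 1) hPint, hEP]
    simp
  have hPne : ¬ P =ᵐ[Pr] 0 := by
    intro h
    have h0 : ∫ ω, P ω ∂Pr = 0 := by rw [integral_congr_ae h]; simp
    rw [hEP] at h0
    exact hp0.ne' h0
  have h1Pne : ¬ (fun ω => 1 - P ω) =ᵐ[Pr] 0 := by
    intro h
    have h0 : ∫ ω, (1 - P ω) ∂Pr = 0 := by rw [integral_congr_ae h]; simp
    rw [hE1P] at h0
    have : p = 1 := by linarith
    exact hp1'.ne this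
  -- measurability with respect to the comap σ-algebra
  have hXmX : @Measurable Ω (Fin m → ℝ) (MeasurableSpace.comap X inferInstance) _ X :=
    fun s hs => ⟨s, hs, rfl⟩
  have hle : MeasurableSpace.comap X inferInstance ≤ (inferInstance : MeasurableSpace Ω) :=
    hX.comap_le
  have hXtmX : ∀ j, @Measurable Ω ℝ (MeasurableSpace.comap X inferInstance) _
      (fun ω => Xt ω j) := by
    intro j
    have : (fun ω => Xt ω j)
        = fun ω => (Fin.cons (1 : ℝ) (X ω) : Fin (m + 1) → ℝ) j :=
      funext fun ω => by rw [hXt]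
    rw [this]; exact (aux_cons_meas j).comp hXmX
  -- the key componentwise identity
  have key : ∀ j, ∫ ω, Xt ω j * Y ω ∂Pr = M.mulVec v j := by
    intro j
    -- pointwise identities using P ∈ {0,1}
    have hfY1 : (fun ω => P ω * (Xt ω j * Y1 ω)) = fun ω => P ω * (Xt ω j * Y ω) := by
      funext ω; rcases hPvals ω with h | h <;> simp [hY, h]
    have hfY2 : (fun ω => (1 - P ω) * (Xt ω j * Y2 ω))
        = fun ω => (1 - P ω) * (Xt ω j * Y ω) := by
      funext ω; rcases hPvals ω with h | h <;> simp [hY, h]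
    -- integrability of the weighted products
    have hPfY : Integrable (fun ω => P ω * (Xt ω j * Y ω)) Pr :=
      (hXtY j).bdd_mul hPint.1
        (Filter.Eventually.of_forall (fun ω => by rcases hPvals ω with h | h <;> simp [h]) : ∀ᵐ ω ∂Pr, _ ≤ (1 : ℝ))
    have h1PfY : Integrable (fun ω => (1 - P ω) * (Xt ω j * Y ω)) Pr :=
      (hXtY j).bdd_mul (aestronglyMeasurable_const.sub hPint.1)
        (Filter.Eventually.of_forall (fun ω => by rcases hPvals ω with h | h <;> simp [h]) : ∀ᵐ ω ∂Pr, _ ≤ (1 : ℝ))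
    -- independence of P from the products
    have hφ1 : Measurable (fun q : (Fin m → ℝ) × ℝ × ℝ =>
        (Fin.cons (1 : ℝ) q.1 : Fin (m + 1) → ℝ) j * q.2.1) :=
      ((aux_cons_meas j).comp measurable_fst).mul (measurable_fst.comp measurable_snd)
    have hφ2 : Measurable (fun q : (Fin m → ℝ) × ℝ × ℝ =>
        (Fin.cons (1 : ℝ) q.1 : Fin (m + 1) → ℝ) j * q.2.2) :=
      ((aux_cons_meas j).comp measurable_fst).mul (measurable_snd.comp measurable_snd)
    have heq1 : (fun ω => Xt ω j * Y1 ω)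
        = (fun q : (Fin m → ℝ) × ℝ × ℝ =>
            (Fin.cons (1 : ℝ) q.1 : Fin (m + 1) → ℝ) j * q.2.1)
          ∘ (fun ω => (X ω, Y1 ω, Y2 ω)) :=
      funext fun ω => by simp [Function.comp, hXt]
    have heq2 : (fun ω => Xt ω j * Y2 ω)
        = (fun q : (Fin m → ℝ) × ℝ × ℝ =>
            (Fin.cons (1 : ℝ) q.1 : Fin (m + 1) → ℝ) j * q.2.2)
          ∘ (fun ω => (X ω, Y1 ω, Y2 ω)) :=
      funext fun ω => by simp [Function.comp, hXt]
    have hindep1 : IndepFun P (fun ω => Xt ω j * Y1 ω) Pr := by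
      rw [heq1]
      exact hindep.comp measurable_id hφ1
    have hindep2 : IndepFun (fun ω => 1 - P ω) (fun ω => Xt ω j * Y2 ω) Pr := by
      rw [heq2]
      exact hindep.comp (measurable_const.sub measurable_id) hφ2
    -- integrability of Xt_j * Y1 and Xt_j * Y2
    have hZ1int : Integrable (fun ω => Xt ω j * Y1 ω) Pr := by
      refine hindep1.integrable_right_of_integrable_mul (fun x y => x * y) 1 one_ne_zero
        (fun x y => by simp [enorm_mul]) ?_ hPint.1
        ((hXtmeas j).mul hY1).aestronglyMeasurable hPne
      show Integrable (P * fun ω => Xt ω j * Y1 ω) Pr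
      have : (P * fun ω => Xt ω j * Y1 ω) = fun ω => P ω * (Xt ω j * Y1 ω) := rfl
      rw [this, hfY1]; exact hPfY
    have hZ2int : Integrable (fun ω => Xt ω j * Y2 ω) Pr := by
      refine hindep2.integrable_right_of_integrable_mul (fun x y => x * y) 1 one_ne_zero
        (fun x y => by simp [enorm_mul]) ?_
        (aestronglyMeasurable_const.sub hPint.1)
        ((hXtmeas j).mul hY2).aestronglyMeasurable h1Pne
      show Integrable ((fun ω => 1 - P ω) * fun ω => Xt ω j * Y2 ω) Pr
      have : ((fun ω => 1 - P ω) * fun ω => Xt ω j * Y2 ω)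
          = fun ω => (1 - P ω) * (Xt ω j * Y2 ω) := rfl
      rw [this, hfY2]; exact h1PfY
    -- factorizations via independence
    have hEPZ1 : ∫ ω, P ω * (Xt ω j * Y ω) ∂Pr = p * ∫ ω, Xt ω j * Y1 ω ∂Pr := by
      rw [← hfY1]
      have h := hindep1.integral_mul_eq_mul_integral hPint.1 hZ1int.1
      have h' : (∫ ω, P ω * (Xt ω j * Y1 ω) ∂Pr)
          = (∫ ω, P ω ∂Pr) * ∫ ω, Xt ω j * Y1 ω ∂Pr := h
      rw [h', hEP]
    have hE1PZ2 : ∫ ω, (1 - P ω) * (Xt ω j * Y ω) ∂Pr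
        = (1 - p) * ∫ ω, Xt ω j * Y2 ω ∂Pr := by
      rw [← hfY2]
      have h := hindep2.integral_mul_eq_mul_integral h1Pint.1 hZ2int.1
      have h' : (∫ ω, (1 - P ω) * (Xt ω j * Y2 ω) ∂Pr)
          = (∫ ω, (1 - P ω) ∂Pr) * ∫ ω, Xt ω j * Y2 ω ∂Pr := h
      rw [h', hE1P]
    -- split the integral
    have hsplit : ∫ ω, Xt ω j * Y ω ∂Pr
        = p * (∫ ω, Xt ω j * Y1 ω ∂Pr) + (1 - p) * (∫ ω, Xt ω j * Y2 ω ∂Pr) := by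
      calc ∫ ω, Xt ω j * Y ω ∂Pr
          = ∫ ω, (P ω * (Xt ω j * Y ω) + (1 - P ω) * (Xt ω j * Y ω)) ∂Pr := by
            congr 1; funext ω; ring
        _ = ∫ ω, P ω * (Xt ω j * Y ω) ∂Pr + ∫ ω, (1 - P ω) * (Xt ω j * Y ω) ∂Pr :=
            integral_add hPfY h1PfY
        _ = p * (∫ ω, Xt ω j * Y1 ω ∂Pr) + (1 - p) * (∫ ω, Xt ω j * Y2 ω ∂Pr) := by
            rw [hEPZ1, hE1PZ2]
    -- conditional expectation step for Y1
    have hEZ1 : ∫ ω, Xt ω j * Y1 ω ∂Pr = ∫ ω, Xt ω j * (μ1 + β ⬝ᵥ X ω) ∂Pr := by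
      have hfm : StronglyMeasurable[MeasurableSpace.comap X inferInstance]
          (fun ω => Xt ω j) := (hXtmX j).stronglyMeasurable
      have hmul : ((fun ω => Xt ω j) * Y1) = fun ω => Xt ω j * Y1 ω := rfl
      have hpull : Pr[(fun ω => Xt ω j) * Y1 | MeasurableSpace.comap X inferInstance]
          =ᵐ[Pr] (fun ω => Xt ω j) * Pr[Y1 | MeasurableSpace.comap X inferInstance] :=
        condExp_mul_of_stronglyMeasurable_left hfm (by rw [hmul]; exact hZ1int) hY1int
      have h2 : Pr[(fun ω => Xt ω j) * Y1 | MeasurableSpace.comap X inferInstance]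
          =ᵐ[Pr] fun ω => Xt ω j * (μ1 + β ⬝ᵥ X ω) := by
        refine hpull.trans ?_
        filter_upwards [hcondY1] with ω hω
        simp only [Pi.mul_apply, hω]
      have h1 := integral_condExp (m := MeasurableSpace.comap X inferInstance)
        (μ := Pr) (f := (fun ω => Xt ω j) * Y1) hle
      have h1' : ∫ ω, Xt ω j * Y1 ω ∂Pr
          = ∫ ω, (Pr[(fun ω => Xt ω j) * Y1 |
              MeasurableSpace.comap X inferInstance]) ω ∂Pr := h1.symm
      exact h1'.trans (integral_congr_ae h2)
    -- independence step for Y2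
    have hEZ2 : ∫ ω, Xt ω j * Y2 ω ∂Pr = (∫ ω, Xt ω j ∂Pr) * μ2 := by
      have hind : IndepFun (fun ω => Xt ω j) Y2 Pr := by
        have heq : (fun ω => Xt ω j)
            = (fun x : Fin m → ℝ => (Fin.cons (1 : ℝ) x : Fin (m + 1) → ℝ) j) ∘ X :=
          funext fun ω => by simp [Function.comp, hXt]
        rw [heq]
        have := hY2X.symm.comp (aux_cons_meas j) measurable_id
        simpa using this
      have h := hind.integral_mul_eq_mul_integral (hXtint j).1 hY2int.1
      have h' : (∫ ω, Xt ω j * Y2 ω ∂Pr) = (∫ ω, Xt ω j ∂Pr) * ∫ ω, Y2 ω ∂Pr := h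
      rw [h', hmeanY2]
    -- expand the regression function integral
    have hfXint : ∀ i : Fin m, Integrable (fun ω => β i * (Xt ω j * X ω i)) Pr :=
      fun i => (aux_mul_integrable (hXt2 j) (hXi2 i)).const_mul (β i)
    have hexp : ∫ ω, Xt ω j * (μ1 + β ⬝ᵥ X ω) ∂Pr
        = μ1 * (∫ ω, Xt ω j ∂Pr) + ∑ i, β i * ∫ ω, Xt ω j * X ω i ∂Pr := by
      calc ∫ ω, Xt ω j * (μ1 + β ⬝ᵥ X ω) ∂Pr
          = ∫ ω, (μ1 * Xt ω j + ∑ i, β i * (Xt ω j * X ω i)) ∂Pr := by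
            congr 1; funext ω
            simp only [dotProduct, mul_add, Finset.mul_sum]
            rw [mul_comm (Xt ω j) μ1]
            congr 1
            exact Finset.sum_congr rfl fun i _ => by ring
        _ = ∫ ω, μ1 * Xt ω j ∂Pr + ∫ ω, (∑ i, β i * (Xt ω j * X ω i)) ∂Pr :=
            integral_add ((hXtint j).const_mul μ1)
              (integrable_finset_sum _ fun i _ => hfXint i)
        _ = μ1 * (∫ ω, Xt ω j ∂Pr) + ∑ i, β i * ∫ ω, Xt ω j * X ω i ∂Pr := by
            rw [integral_finset_sum _ fun i _ => hfXint i]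
            simp [integral_const_mul]
    -- compute the matrix-vector product entry
    have hMv : M.mulVec v j
        = c * (∫ ω, Xt ω j ∂Pr) + p * ∑ i, β i * ∫ ω, Xt ω j * X ω i ∂Pr := by
      rw [hM]
      simp only [Matrix.mulVec, dotProduct, Matrix.of_apply]
      rw [Fin.sum_univ_succ]
      have h0 : (∫ ω, Xt ω j * Xt ω 0 ∂Pr) * v 0 = c * ∫ ω, Xt ω j ∂Pr := by
        have : (fun ω => Xt ω j * Xt ω 0) = fun ω => Xt ω j := by
          funext ω; rw [hXt]; simp
        rw [this, hv]
        simp [mul_comm]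
      have hsucc : ∀ i : Fin m, (∫ ω, Xt ω j * Xt ω i.succ ∂Pr) * v i.succ
          = p * (β i * ∫ ω, Xt ω j * X ω i ∂Pr) := by
        intro i
        have : (fun ω => Xt ω j * Xt ω i.succ) = fun ω => Xt ω j * X ω i := by
          funext ω; rw [hXt]; simp
        rw [this, hv]
        simp only [Fin.cons_succ, Pi.smul_apply, smul_eq_mul]
        ring
      rw [h0]
      rw [Finset.sum_congr rfl fun i _ => hsucc i, ← Finset.mul_sum]
    rw [hsplit, hEZ1, hexp, hEZ2, hMv, hc]
    ring
  -- assemble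
  have hvec : (fun j => ∫ ω, Xt ω j * Y ω ∂Pr) = M.mulVec v := funext key
  have hinv : M⁻¹.mulVec (M.mulVec v) = v := by
    rw [Matrix.mulVec_mulVec, Matrix.nonsing_inv_mul M hMinv, Matrix.one_mulVec]
  rw [hvec, hinv]
  funext i
  rw [hA]
  simp only [Matrix.mulVec, dotProduct, Matrix.of_apply, ite_mul, one_mul, zero_mul]
  rw [Finset.sum_ite_eq' Finset.univ i.succ v]
  simp [hv]
end

section
/- The ordinary least-squares estimator admits the asymptotic i.i.d. decomposition √n(λ̂1⁽ⁿ⁾ − λ1) = n^{−1/2} Σ_{i=1}^n ε_i + o_P(1), where ε_i = A(m)·E[X̃_iX̃_iᵀ]⁻¹·X̃_i·{Y_i − E(Y_i | X̃_i)}; that is, √n(λ̂1⁽ⁿ⁾ − λ1) − n^{−1/2} Σ_{i=1}^n ε_i converges to 0 in probability as n → ∞. -/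
set_option maxHeartbeats 1000000


open MeasureTheory ProbabilityTheory Filter Matrix

section AuxOLS

/-- product of two L² functions is integrable -/
lemma auxOLS_integrable_mul {Ω : Type*} [MeasurableSpace Ω] {μ : Measure Ω} {f g : Ω → ℝ}
    (hf : MemLp f 2 μ) (hg : MemLp g 2 μ) : Integrable (fun ω => f ω * g ω) μ := by
  have h : MemLp (f • g) 1 μ := hg.smul hf
  exact memLp_one_iff_integrable.mp h

lemma auxOLS_meas_cons1 {m : ℕ} (j : Fin (m + 1)) :
    Measurable fun x : Fin m → ℝ => (Fin.cons 1 x : Fin (m + 1) → ℝ) j := by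
  induction j using Fin.cases with
  | zero => simpa using measurable_const
  | succ i => simpa using measurable_pi_apply i

lemma auxOLS_meas_det {Ω : Type*} [MeasurableSpace Ω] {N : ℕ}
    {B : Ω → Matrix (Fin N) (Fin N) ℝ} (h : ∀ j k, Measurable fun ω => B ω j k) :
    Measurable fun ω => (B ω).det := by
  simp only [Matrix.det_apply']
  exact Finset.measurable_sum _ fun σ _ =>
    (measurable_const.mul (Finset.measurable_prod _ fun i _ => h _ _))

lemma auxOLS_smul_inv {N : ℕ} (c : ℝ) (hc : c ≠ 0) (B : Matrix (Fin (N + 1)) (Fin (N + 1)) ℝ) :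
    (c • B)⁻¹ = c⁻¹ • B⁻¹ := by
  rw [Matrix.inv_def, Matrix.inv_def, Matrix.det_smul, Matrix.adjugate_smul]
  have hcard : Fintype.card (Fin (N + 1)) = N + 1 := by simp
  rw [hcard]
  simp only [Ring.inverse_eq_inv']
  rw [smul_smul, smul_smul]
  congr 1
  have h1 : (c ^ (N + 1) : ℝ)⁻¹ * c ^ (N + 1 - 1) = c⁻¹ := by
    rw [pow_succ, mul_inv, Nat.add_sub_cancel, mul_comm (c ^ N)⁻¹ c⁻¹, mul_assoc,
      inv_mul_cancel₀ (pow_ne_zero _ hc), mul_one]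
  calc (c ^ (N + 1) * B.det)⁻¹ * c ^ (N + 1 - 1)
      = ((c ^ (N + 1))⁻¹ * c ^ (N + 1 - 1)) * B.det⁻¹ := by rw [mul_inv]; ring
    _ = c⁻¹ * B.det⁻¹ := by rw [h1]

end AuxOLS

/-- The OLS estimator admits the asymptotic i.i.d. decomposition
`√n(λ̂1⁽ⁿ⁾ − λ1) = n^{−1/2} Σ_{i=1}^n ε_i + o_P(1)`, where
`ε_i = A(m)·E[X̃_iX̃_iᵀ]⁻¹·X̃_i·{Y_i − E(Y_i | X̃_i)}` (here `E(Y_i | X̃_i) = α + λ1ᵀX_i`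
by the model hypothesis): the difference converges to `0` in probability. -/
theorem ols_asymptotic_iid_decomposition
    {Ω : Type*} [MeasurableSpace Ω] (Pr : Measure Ω) [IsProbabilityMeasure Pr]
    {m : ℕ} (X : Ω → (Fin m → ℝ)) (Y : Ω → ℝ)
    (hX : Measurable X) (hYmeas : Measurable Y)
    (α : ℝ) (lam1 : Fin m → ℝ)
    (hXL2 : MemLp X 2 Pr) (hYL2 : MemLp Y 2 Pr)
    (hcond : Pr[Y | MeasurableSpace.comap X inferInstance]
        =ᵐ[Pr] fun ω => α + lam1 ⬝ᵥ X ω)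
    -- E[‖X̃(Y − E(Y|X̃))‖²] < ∞
    (hresL2 : MemLp
      (fun ω => ((fun j => (Fin.cons 1 (X ω) : Fin (m + 1) → ℝ) j
        * (Y ω - (α + lam1 ⬝ᵥ X ω))) : Fin (m + 1) → ℝ)) 2 Pr)
    -- an i.i.d. sample of copies of (X, Y)
    (Z : ℕ → Ω → (Fin m → ℝ) × ℝ)
    (hZmeas : ∀ i, Measurable (Z i))
    (hiid : iIndepFun Z Pr)
    (hident : ∀ i, IdentDistrib (Z i) (fun ω => (X ω, Y ω)) Pr Pr)
    -- extended design vectors, projection matrix, Gram matrices, OLS estimator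
    (Xt : ℕ → Ω → (Fin (m + 1) → ℝ)) (hXt : ∀ i ω, Xt i ω = Fin.cons 1 ((Z i ω).1))
    (A : Matrix (Fin m) (Fin (m + 1)) ℝ)
    (hA : A = Matrix.of fun i j => if j = i.succ then (1 : ℝ) else 0)
    (G : ℕ → Ω → Matrix (Fin (m + 1)) (Fin (m + 1)) ℝ)
    (hG : ∀ n ω, G n ω = ∑ i ∈ Finset.range n, Matrix.of fun j k => Xt i ω j * Xt i ω k)
    (lamhat : ℕ → Ω → (Fin m → ℝ))
    (hlamhat : ∀ n ω,
      lamhat n ω = A.mulVec ((G n ω)⁻¹.mulVec (∑ i ∈ Finset.range n, fun j => Xt i ω j * (Z i ω).2)))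
    (M : Matrix (Fin (m + 1)) (Fin (m + 1)) ℝ)
    (hM : M = Matrix.of fun j k =>
      ∫ ω, (Fin.cons 1 (X ω) : Fin (m + 1) → ℝ) j * (Fin.cons 1 (X ω) : Fin (m + 1) → ℝ) k ∂Pr)
    (hMinv : IsUnit M.det)
    -- the i.i.d. influence terms ε_i
    (ε : ℕ → Ω → (Fin m → ℝ))
    (hε : ∀ i ω, ε i ω = A.mulVec (M⁻¹.mulVec
      (fun j => Xt i ω j * ((Z i ω).2 - (α + lam1 ⬝ᵥ (Z i ω).1))))) :
    ∀ δ > (0 : ℝ), Tendsto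
      (fun n : ℕ => Pr {ω | δ < ‖(Real.sqrt n) • (lamhat n ω - lam1)
        - (Real.sqrt n)⁻¹ • ∑ i ∈ Finset.range n, ε i ω‖})
      atTop (nhds 0) := by
  classical
  intro δ hδ
  -- the residual map and its basic properties
  set w : (Fin m → ℝ) × ℝ → Fin (m + 1) → ℝ :=
    fun p j => (Fin.cons 1 p.1 : Fin (m + 1) → ℝ) j * (p.2 - (α + lam1 ⬝ᵥ p.1)) with hw
  have hwjmeas : ∀ j, Measurable fun p : (Fin m → ℝ) × ℝ => w p j := by
    intro j
    apply ((auxOLS_meas_cons1 j).comp measurable_fst).mul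
    apply measurable_snd.sub
    apply measurable_const.add
    exact Finset.measurable_sum _ fun i _ =>
      measurable_const.mul ((measurable_pi_apply i).comp measurable_fst)
  set W : ℕ → Ω → Fin (m + 1) → ℝ := fun i ω => w (Z i ω) with hWdef
  set W0 : Ω → Fin (m + 1) → ℝ := fun ω => w (X ω, Y ω) with hW0def
  have hW0L2 : MemLp W0 2 Pr := hresL2
  have hW0jL2 : ∀ j, MemLp (fun ω => W0 ω j) 2 Pr := by
    intro j
    exact (ContinuousLinearMap.proj (R := ℝ) (φ := fun _ : Fin (m + 1) => ℝ) j).comp_memLp' hW0L2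
  have hWident : ∀ i j, IdentDistrib (fun ω => W i ω j) (fun ω => W0 ω j) Pr Pr := by
    intro i j
    exact (hident i).comp (hwjmeas j)
  have hWjL2 : ∀ i j, MemLp (fun ω => W i ω j) 2 Pr := by
    intro i j
    exact ((hWident i j).memLp_iff).mpr (hW0jL2 j)
  -- coordinates of X̃ (copy version) are in L²
  have hc1L2 : ∀ j : Fin (m + 1), MemLp (fun ω => (Fin.cons 1 (X ω) : Fin (m + 1) → ℝ) j) 2 Pr := by
    intro j
    induction j using Fin.cases with
    | zero => simpa using memLp_const (1 : ℝ)
    | succ i =>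
      simp only [Fin.cons_succ]
      exact
        ((ContinuousLinearMap.proj (R := ℝ) (φ := fun _ : Fin m => ℝ) i).comp_memLp' hXL2 :
          MemLp (fun ω => X ω i) 2 Pr)
  -- L² of the regression function
  have hregL2 : MemLp (fun ω => α + lam1 ⬝ᵥ X ω) 2 Pr := by
    apply (memLp_const α).add
    have hs := memLp_finset_sum' (f := fun (i : Fin m) ω => lam1 i * X ω i) Finset.univ
      (fun i _ => ((ContinuousLinearMap.proj (R := ℝ) (φ := fun _ : Fin m => ℝ)
        i).comp_memLp' hXL2).const_mul (lam1 i)) (μ := Pr) (p := 2)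
    have heq : (fun ω => lam1 ⬝ᵥ X ω) = fun ω => ∑ i : Fin m, lam1 i * X ω i := by
      funext ω; simp [dotProduct]
    rw [heq]
    convert hs using 1
    funext ω
    simp
  -- mean zero of the residual vector
  have hmean0 : ∀ j, ∫ ω, W0 ω j ∂Pr = 0 := by
    intro j
    set f : Ω → ℝ := fun ω => (Fin.cons 1 (X ω) : Fin (m + 1) → ℝ) j with hf
    set h : Ω → ℝ := fun ω => α + lam1 ⬝ᵥ X ω with hh
    have hle : MeasurableSpace.comap X inferInstance ≤ ‹MeasurableSpace Ω› := hX.comap_le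
    have hfm : StronglyMeasurable[MeasurableSpace.comap X inferInstance] f :=
      ((auxOLS_meas_cons1 j).comp (comap_measurable X)).stronglyMeasurable
    have hYint : Integrable Y Pr := hYL2.integrable one_le_two
    have hfY : Integrable (f * Y) Pr := auxOLS_integrable_mul (hc1L2 j) hYL2
    have hfh : Integrable (fun ω => f ω * h ω) Pr := auxOLS_integrable_mul (hc1L2 j) hregL2
    have key : ∫ ω, f ω * Y ω ∂Pr = ∫ ω, f ω * h ω ∂Pr := by
      calc ∫ ω, f ω * Y ω ∂Pr = ∫ ω, (f * Y) ω ∂Pr := rfl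
        _ = ∫ ω, (Pr[f * Y|MeasurableSpace.comap X inferInstance]) ω ∂Pr :=
            (integral_condExp hle (f := f * Y)).symm
        _ = ∫ ω, (f * Pr[Y|MeasurableSpace.comap X inferInstance]) ω ∂Pr :=
            integral_congr_ae (condExp_mul_of_stronglyMeasurable_left hfm hfY hYint)
        _ = ∫ ω, f ω * h ω ∂Pr := by
            apply integral_congr_ae
            filter_upwards [hcond] with ω hω
            simp only [Pi.mul_apply, hω]
    have hfY' : Integrable (fun ω => f ω * Y ω) Pr := hfY
    have hexp : (fun ω => W0 ω j) = fun ω => f ω * Y ω - f ω * h ω := by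
      funext ω
      simp only [hW0def, hw, hf, hh]
      ring
    rw [hexp, integral_sub hfY' hfh, key, sub_self]
  -- a.e. strong-law convergence of the normalized Gram matrix
  have hae : ∀ᵐ ω ∂Pr, Tendsto (fun n : ℕ => (n : ℝ)⁻¹ • G n ω) atTop (nhds M) := by
    have hent : ∀ j k : Fin (m + 1), ∀ᵐ ω ∂Pr,
        Tendsto (fun n : ℕ => (∑ i ∈ Finset.range n,
            (Fin.cons 1 ((Z i ω).1) : Fin (m + 1) → ℝ) j
            * (Fin.cons 1 ((Z i ω).1) : Fin (m + 1) → ℝ) k) / n)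
          atTop (nhds (M j k)) := by
      intro j k
      set g0 : (Fin m → ℝ) × ℝ → ℝ := fun p =>
        (Fin.cons 1 p.1 : Fin (m + 1) → ℝ) j * (Fin.cons 1 p.1 : Fin (m + 1) → ℝ) k with hg0
      have hg0meas : Measurable g0 :=
        ((auxOLS_meas_cons1 j).comp measurable_fst).mul
          ((auxOLS_meas_cons1 k).comp measurable_fst)
      have hid : ∀ i, IdentDistrib (fun ω => g0 (Z i ω)) (fun ω => g0 (X ω, Y ω)) Pr Pr :=
        fun i => (hident i).comp hg0meas
      have hint : Integrable (fun ω => g0 (Z 0 ω)) Pr :=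
        (hid 0).symm.integrable_snd (auxOLS_integrable_mul (hc1L2 j) (hc1L2 k))
      have hindep : Pairwise (Function.onFun (IndepFun · · Pr) fun i ω => g0 (Z i ω)) :=
        fun i i' hii' => (hiid.indepFun hii').comp hg0meas hg0meas
      have hSL := strong_law_ae_real (fun i ω => g0 (Z i ω)) hint hindep
        (fun i => (hid i).trans (hid 0).symm)
      have hlim : ∫ ω, g0 (Z 0 ω) ∂Pr = M j k := by
        rw [(hid 0).integral_eq, hM]
        rfl
      rw [hlim] at hSL
      exact hSL
    have hall : ∀ᵐ ω ∂Pr, ∀ j k : Fin (m + 1),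
        Tendsto (fun n : ℕ => (∑ i ∈ Finset.range n,
            (Fin.cons 1 ((Z i ω).1) : Fin (m + 1) → ℝ) j
            * (Fin.cons 1 ((Z i ω).1) : Fin (m + 1) → ℝ) k) / n)
          atTop (nhds (M j k)) :=
      ae_all_iff.2 fun j => ae_all_iff.2 fun k => hent j k
    filter_upwards [hall] with ω hω
    refine tendsto_pi_nhds.mpr fun j => tendsto_pi_nhds.mpr fun k => ?_
    have hGjk : ∀ n : ℕ, ((n : ℝ)⁻¹ • G n ω) j k = (∑ i ∈ Finset.range n,
        (Fin.cons 1 ((Z i ω).1) : Fin (m + 1) → ℝ) j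
        * (Fin.cons 1 ((Z i ω).1) : Fin (m + 1) → ℝ) k) / n := by
      intro n
      rw [hG]
      simp only [Matrix.smul_apply, Matrix.sum_apply, Matrix.of_apply, smul_eq_mul,
        div_eq_inv_mul, hXt]
    simpa only [hGjk] using hω j k
  -- more notation
  set T : ℕ → Ω → Fin (m + 1) → ℝ := fun n ω => ∑ i ∈ Finset.range n, W i ω with hT
  set Cm : ℕ → Ω → Matrix (Fin (m + 1)) (Fin (m + 1)) ℝ :=
    fun n ω => (n : ℝ) • (G n ω)⁻¹ - M⁻¹ with hCm
  have hdetM : M.det ≠ 0 := by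
    intro h0
    rw [h0] at hMinv
    exact not_isUnit_zero hMinv
  -- measurability facts
  have hXtm : ∀ i j, Measurable fun ω => Xt i ω j := by
    intro i j
    simp only [hXt]
    exact (auxOLS_meas_cons1 j).comp (hZmeas i).fst
  have hGm : ∀ n j k, Measurable fun ω => G n ω j k := by
    intro n j k
    simp only [hG, Matrix.sum_apply, Matrix.of_apply]
    exact Finset.measurable_sum _ fun i _ => (hXtm i j).mul (hXtm i k)
  have hdetGm : ∀ n, Measurable fun ω => (G n ω).det := fun n => auxOLS_meas_det (hGm n)
  have hadjGm : ∀ n j k, Measurable fun ω => (G n ω).adjugate j k := by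
    intro n j k
    have e : ∀ ω, (G n ω).adjugate j k = ((G n ω).updateRow k (Pi.single j 1)).det :=
      fun ω => Matrix.adjugate_apply _ _ _
    simp only [e]
    apply auxOLS_meas_det
    intro a b
    by_cases hab : a = k
    · simp only [Matrix.updateRow_apply, if_pos hab]
      exact measurable_const
    · simp only [Matrix.updateRow_apply, if_neg hab]
      exact hGm n a b
  have hinvGm : ∀ n j k, Measurable fun ω => (G n ω)⁻¹ j k := by
    intro n j k
    have e : ∀ ω, (G n ω)⁻¹ j k = ((G n ω).det)⁻¹ * (G n ω).adjugate j k := by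
      intro ω
      rw [Matrix.inv_def, Matrix.smul_apply, Ring.inverse_eq_inv, smul_eq_mul]
    simp only [e]
    exact (hdetGm n).inv.mul (hadjGm n j k)
  have hCmm : ∀ n j k, Measurable fun ω => Cm n ω j k := by
    intro n j k
    have e : ∀ ω, Cm n ω j k = (n : ℝ) * (G n ω)⁻¹ j k - M⁻¹ j k := by
      intro ω
      simp [hCm, Matrix.sub_apply, Matrix.smul_apply, smul_eq_mul]
    simp only [e]
    exact (measurable_const.mul (hinvGm n j k)).sub measurable_const
  -- algebraic identities
  have hAu : ∀ u : Fin (m + 1) → ℝ, A.mulVec u = fun i => u i.succ := by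
    intro u
    funext i
    rw [hA]
    simp only [Matrix.mulVec, dotProduct, Matrix.of_apply, ite_mul, one_mul, zero_mul]
    rw [Finset.sum_ite_eq' Finset.univ i.succ u]
    simp
  have hAβ : A.mulVec (Fin.cons α lam1) = lam1 := by
    rw [hAu]
    funext i
    simp
  have hrow : ∀ (i : ℕ) (ω : Ω), ∑ k : Fin (m + 1), Xt i ω k * (Fin.cons α lam1 : Fin (m+1) → ℝ) k
      = α + lam1 ⬝ᵥ (Z i ω).1 := by
    intro i ω
    rw [hXt, Fin.sum_univ_succ]
    simp only [Fin.cons_zero, Fin.cons_succ, one_mul]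
    congr 1
    simp [dotProduct, mul_comm]
  have hsum_eq : ∀ n ω, (∑ i ∈ Finset.range n, fun j => Xt i ω j * (Z i ω).2)
      = (G n ω).mulVec (Fin.cons α lam1) + T n ω := by
    intro n ω
    funext j
    rw [hG]
    simp only [Finset.sum_apply, Pi.add_apply, Matrix.mulVec, dotProduct,
      Matrix.sum_apply, Matrix.of_apply, hT]
    have hterm : ∀ i : ℕ, Xt i ω j * (Z i ω).2
        = (∑ k : Fin (m + 1), Xt i ω j * Xt i ω k * (Fin.cons α lam1 : Fin (m+1) → ℝ) k)
          + W i ω j := by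
      intro i
      have : (∑ k : Fin (m + 1), Xt i ω j * Xt i ω k * (Fin.cons α lam1 : Fin (m+1) → ℝ) k)
          = Xt i ω j * (α + lam1 ⬝ᵥ (Z i ω).1) := by
        rw [← hrow i ω, Finset.mul_sum]
        exact Finset.sum_congr rfl fun k _ => by ring
      rw [this]
      simp only [hWdef, hw, hXt]
      ring
    rw [Finset.sum_congr rfl fun i _ => hterm i, Finset.sum_add_distrib]
    congr 1
    rw [Finset.sum_comm]
    exact Finset.sum_congr rfl fun k _ => (Finset.sum_mul _ _ _).symm
  have hεeq : ∀ i ω, ε i ω = A.mulVec (M⁻¹.mulVec (W i ω)) := by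
    intro i ω
    rw [hε]
    congr 2
    funext j
    simp only [hWdef, hw, hXt]
  have hmulVec_sum : ∀ {a b : ℕ} (B : Matrix (Fin a) (Fin b) ℝ) (s : Finset ℕ)
      (u : ℕ → Fin b → ℝ), B.mulVec (∑ i ∈ s, u i) = ∑ i ∈ s, B.mulVec (u i) := by
    intro a b B s u
    simpa only [Matrix.mulVecLin_apply] using map_sum B.mulVecLin u s
  have hsumε : ∀ n ω, ∑ i ∈ Finset.range n, ε i ω = A.mulVec (M⁻¹.mulVec (T n ω)) := by
    intro n ω
    rw [Finset.sum_congr rfl fun i _ => hεeq i ω, ← hmulVec_sum, ← hmulVec_sum]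
  have hidkey : ∀ n : ℕ, 1 ≤ n → ∀ ω : Ω, IsUnit (G n ω).det →
      (Real.sqrt n) • (lamhat n ω - lam1) - (Real.sqrt n)⁻¹ • ∑ i ∈ Finset.range n, ε i ω
        = A.mulVec ((Cm n ω).mulVec ((Real.sqrt n)⁻¹ • T n ω)) := by
    intro n hn ω hunit
    have hnpos : (0 : ℝ) < n := by exact_mod_cast hn
    have hsq : Real.sqrt n ≠ 0 := ne_of_gt (Real.sqrt_pos.mpr hnpos)
    have hns : (Real.sqrt n)⁻¹ * (n : ℝ) = Real.sqrt n := by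
      rw [inv_mul_eq_div, div_eq_iff hsq]
      exact (Real.mul_self_sqrt hnpos.le).symm
    have h1 : lamhat n ω - lam1 = A.mulVec ((G n ω)⁻¹.mulVec (T n ω)) := by
      rw [hlamhat, hsum_eq, Matrix.mulVec_add, Matrix.mulVec_mulVec,
        Matrix.nonsing_inv_mul _ hunit, Matrix.one_mulVec, Matrix.mulVec_add, hAβ]
      exact add_sub_cancel_left _ _
    have h2 : ((n : ℝ) • (G n ω)⁻¹).mulVec ((Real.sqrt n)⁻¹ • T n ω)
        = (Real.sqrt n) • (G n ω)⁻¹.mulVec (T n ω) := by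
      rw [Matrix.smul_mulVec, Matrix.mulVec_smul, smul_smul, mul_comm, hns]
    have h3 : M⁻¹.mulVec ((Real.sqrt n)⁻¹ • T n ω)
        = (Real.sqrt n)⁻¹ • M⁻¹.mulVec (T n ω) := Matrix.mulVec_smul _ _ _
    rw [h1, hsumε]
    simp only [hCm]
    rw [Matrix.sub_mulVec, h2, h3, Matrix.mulVec_sub, Matrix.mulVec_smul, Matrix.mulVec_smul]
  -- convergence in measure of the determinant of the normalized Gram matrix
  have hdetseq : TendstoInMeasure Pr (fun (n : ℕ) ω => ((n : ℝ)⁻¹ • G n ω).det) atTop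
      (fun _ => M.det) := by
    apply tendstoInMeasure_of_tendsto_ae
    · intro n
      apply Measurable.aestronglyMeasurable
      apply auxOLS_meas_det
      intro j k
      simp only [Matrix.smul_apply, smul_eq_mul]
      exact measurable_const.mul (hGm n j k)
    · filter_upwards [hae] with ω hω
      exact (continuous_id.matrix_det.continuousAt.tendsto).comp hω
  -- convergence in measure of the entries of `Cm` to zero
  have hCmseq : ∀ j k, TendstoInMeasure Pr (fun (n : ℕ) ω => Cm n ω j k) atTop (fun _ => 0) := by
    intro j k
    apply tendstoInMeasure_of_tendsto_ae (fun n => (hCmm n j k).aestronglyMeasurable)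
    filter_upwards [hae] with ω hω
    have hinv : Tendsto (fun n : ℕ => ((n : ℝ)⁻¹ • G n ω)⁻¹) atTop (nhds M⁻¹) := by
      have hcont : ContinuousAt Inv.inv M :=
        continuousAt_matrix_inv M (by rw [Ring.inverse_eq_inv']; exact continuousAt_inv₀ hdetM)
      exact hcont.tendsto.comp hω
    have hentry : Tendsto (fun n : ℕ => ((n : ℝ)⁻¹ • G n ω)⁻¹ j k - M⁻¹ j k) atTop (nhds 0) := by
      have h1 := tendsto_pi_nhds.mp (tendsto_pi_nhds.mp hinv j) k
      simpa using h1.sub (tendsto_const_nhds (x := M⁻¹ j k))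
    apply hentry.congr'
    filter_upwards [eventually_ge_atTop 1] with n hn
    have hnne : ((n : ℝ))⁻¹ ≠ 0 := by
      have : (0 : ℝ) < n := by exact_mod_cast hn
      positivity
    have he : ((n : ℝ)⁻¹ • G n ω)⁻¹ = (n : ℝ) • (G n ω)⁻¹ := by
      rw [auxOLS_smul_inv _ hnne (G n ω), inv_inv]
    rw [he]
    simp [hCm, Matrix.sub_apply]
  -- Chebyshev bound for the normalized sums
  set v : Fin (m + 1) → ℝ := fun j => variance (fun ω => W0 ω j) Pr with hv
  have hvnn : ∀ j, 0 ≤ v j := fun j => variance_nonneg _ _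
  have hcheb : ∀ K : ℝ, 0 < K → ∀ n : ℕ, 1 ≤ n → ∀ j : Fin (m + 1),
      Pr {ω | K ≤ |(Real.sqrt n)⁻¹ * T n ω j|} ≤ ENNReal.ofReal (v j / K ^ 2) := by
    intro K hK n hn j
    have hnpos : (0 : ℝ) < n := by exact_mod_cast hn
    have hsqpos : 0 < Real.sqrt n := Real.sqrt_pos.mpr hnpos
    set ξ : ℕ → Ω → ℝ := fun i ω => W i ω j with hξ
    have hξL2 : ∀ i ∈ Finset.range n, MemLp (ξ i) 2 Pr := fun i _ => hWjL2 i j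
    have hsumL2 : MemLp (∑ i ∈ Finset.range n, ξ i) 2 Pr := memLp_finset_sum' _ hξL2
    have hsum_app : ∀ ω, (∑ i ∈ Finset.range n, ξ i) ω = ∑ i ∈ Finset.range n, ξ i ω := by
      intro ω
      simp
    have hmean : Pr[∑ i ∈ Finset.range n, ξ i] = 0 := by
      rw [show (∑ i ∈ Finset.range n, ξ i) = fun ω => ∑ i ∈ Finset.range n, ξ i ω from
        funext hsum_app]
      rw [integral_finset_sum _ fun i _ => (hWjL2 i j).integrable one_le_two]
      rw [Finset.sum_congr rfl fun i _ => (hWident i j).integral_eq]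
      simp [hmean0 j]
    have hvar : variance (∑ i ∈ Finset.range n, ξ i) Pr = n * v j := by
      rw [IndepFun.variance_sum hξL2 ?pairwise]
      case pairwise =>
        intro i hi i' hi' hii'
        exact (hiid.indepFun hii').comp (hwjmeas j) (hwjmeas j)
      rw [Finset.sum_congr rfl fun i _ => (hWident i j).variance_eq]
      simp [hv, mul_comm]
    have hbound := meas_ge_le_variance_div_sq (μ := Pr) hsumL2
      (c := K * Real.sqrt n) (by positivity)
    rw [hmean, hvar] at hbound
    have hset : {ω | K ≤ |(Real.sqrt n)⁻¹ * T n ω j|}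
        ⊆ {ω | K * Real.sqrt n ≤ |(∑ i ∈ Finset.range n, ξ i) ω - 0|} := by
      intro ω hω
      simp only [Set.mem_setOf_eq] at hω ⊢
      rw [sub_zero, hsum_app]
      have hTj : T n ω j = ∑ i ∈ Finset.range n, ξ i ω := by
        simp [hT, hξ]
      rw [hTj, abs_mul, abs_inv, abs_of_nonneg hsqpos.le] at hω
      calc K * Real.sqrt n ≤ ((Real.sqrt n)⁻¹ * |∑ i ∈ Finset.range n, ξ i ω|) * Real.sqrt n :=
            mul_le_mul_of_nonneg_right hω hsqpos.le
        _ = |∑ i ∈ Finset.range n, ξ i ω| := by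
            field_simp
    refine le_trans (measure_mono hset) (le_trans hbound (le_of_eq ?_))
    congr 1
    rw [mul_pow, Real.sq_sqrt hnpos.le]
    field_simp
  -- final assembly
  refine ENNReal.tendsto_nhds_zero.mpr fun εe hεe => ?_
  obtain ⟨r, hr0, hrε⟩ : ∃ r : ℝ, 0 < r ∧ ENNReal.ofReal r ≤ εe := by
    rcases eq_or_ne εe ⊤ with h | h
    · exact ⟨1, one_pos, by simp [h]⟩
    · exact ⟨εe.toReal, ENNReal.toReal_pos hεe.ne' h, by rw [ENNReal.ofReal_toReal h]⟩
  set Sv : ℝ := ∑ j : Fin (m + 1), v j with hSv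
  have hSvnn : 0 ≤ Sv := Finset.sum_nonneg fun j _ => hvnn j
  set K : ℝ := Real.sqrt ((Sv + 1) * 3 / r) with hKdef
  have hKpos : 0 < K := Real.sqrt_pos.mpr (by positivity)
  have hK2 : K ^ 2 = (Sv + 1) * 3 / r := Real.sq_sqrt (by positivity)
  set η : ℝ := δ / ((m + 1) * K) with hηdef
  have hηpos : 0 < η := by positivity
  have hter : (0 : ENNReal) < ENNReal.ofReal (r / 3) := ENNReal.ofReal_pos.mpr (by positivity)
  have hev1 : ∀ᶠ n : ℕ in atTop,
      Pr {ω | |M.det| ≤ |((n : ℝ)⁻¹ • G n ω).det - M.det|} ≤ ENNReal.ofReal (r / 3) := by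
    have h := (tendstoInMeasure_iff_dist.mp hdetseq |M.det| (abs_pos.mpr hdetM)).eventually_le_const hter
    simpa [Real.dist_eq] using h
  have hev2 : ∀ᶠ n : ℕ in atTop,
      (∑ p : Fin (m + 1) × Fin (m + 1), Pr {ω | η ≤ |Cm n ω p.1 p.2|})
        ≤ ENNReal.ofReal (r / 3) := by
    have hp : ∀ p : Fin (m + 1) × Fin (m + 1),
        Tendsto (fun n : ℕ => Pr {ω | η ≤ |Cm n ω p.1 p.2|}) atTop (nhds 0) := by
      intro p
      have := tendstoInMeasure_iff_dist.mp (hCmseq p.1 p.2) η hηpos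
      simpa [Real.dist_eq] using this
    have h := tendsto_finset_sum (Finset.univ : Finset (Fin (m + 1) × Fin (m + 1)))
      (fun p _ => hp p)
    have h0 : Tendsto (fun n : ℕ => ∑ p : Fin (m + 1) × Fin (m + 1),
        Pr {ω | η ≤ |Cm n ω p.1 p.2|}) atTop (nhds 0) := by simpa using h
    exact h0.eventually_le_const hter
  have hev3 : ∀ n : ℕ, 1 ≤ n →
      (∑ j : Fin (m + 1), Pr {ω | K ≤ |(Real.sqrt n)⁻¹ * T n ω j|})
        ≤ ENNReal.ofReal (r / 3) := by
    intro n hn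
    calc (∑ j : Fin (m + 1), Pr {ω | K ≤ |(Real.sqrt n)⁻¹ * T n ω j|})
        ≤ ∑ j : Fin (m + 1), ENNReal.ofReal (v j / K ^ 2) :=
          Finset.sum_le_sum fun j _ => hcheb K hKpos n hn j
      _ = ENNReal.ofReal (∑ j : Fin (m + 1), v j / K ^ 2) :=
          (ENNReal.ofReal_sum_of_nonneg (fun j _ => div_nonneg (hvnn j) (by positivity))).symm
      _ ≤ ENNReal.ofReal (r / 3) := by
          apply ENNReal.ofReal_le_ofReal
          rw [← Finset.sum_div, ← hSv, hK2, div_div_eq_mul_div,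
            div_le_div_iff₀ (by positivity) (by positivity)]
          nlinarith [hSvnn, hr0.le]
  filter_upwards [eventually_ge_atTop 1, hev1, hev2] with n hn h1 h2
  have hsub : {ω | δ < ‖(Real.sqrt n) • (lamhat n ω - lam1)
        - (Real.sqrt n)⁻¹ • ∑ i ∈ Finset.range n, ε i ω‖}
      ⊆ {ω | |M.det| ≤ |((n : ℝ)⁻¹ • G n ω).det - M.det|}
        ∪ (⋃ p : Fin (m + 1) × Fin (m + 1), {ω | η ≤ |Cm n ω p.1 p.2|})
        ∪ (⋃ j : Fin (m + 1), {ω | K ≤ |(Real.sqrt n)⁻¹ * T n ω j|}) := by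
    intro ω hω
    simp only [Set.mem_setOf_eq] at hω
    by_contra hcon
    simp only [Set.mem_union, Set.mem_iUnion, Set.mem_setOf_eq, not_or, not_exists,
      not_le] at hcon
    obtain ⟨⟨hc1, hc2⟩, hc3⟩ := hcon
    have hdetG : IsUnit (G n ω).det := by
      rw [isUnit_iff_ne_zero]
      intro h0
      have hz : ((n : ℝ)⁻¹ • G n ω).det = 0 := by
        rw [Matrix.det_smul, h0, mul_zero]
      rw [hz] at hc1
      simp at hc1
    have hD := hidkey n hn ω hdetG
    rw [hD] at hω
    have hδ' : ‖A.mulVec ((Cm n ω).mulVec ((Real.sqrt n)⁻¹ • T n ω))‖ ≤ δ := by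
      rw [hAu]
      refine (pi_norm_le_iff_of_nonneg hδ.le).mpr fun i => ?_
      rw [Real.norm_eq_abs]
      have he : (Cm n ω).mulVec ((Real.sqrt n)⁻¹ • T n ω) i.succ
          = ∑ k : Fin (m + 1), Cm n ω i.succ k * ((Real.sqrt n)⁻¹ * T n ω k) := by
        simp [Matrix.mulVec, dotProduct, Pi.smul_apply, smul_eq_mul]
      rw [he]
      calc |∑ k : Fin (m + 1), Cm n ω i.succ k * ((Real.sqrt n)⁻¹ * T n ω k)|
          ≤ ∑ k : Fin (m + 1), |Cm n ω i.succ k * ((Real.sqrt n)⁻¹ * T n ω k)| :=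
            Finset.abs_sum_le_sum_abs _ _
        _ ≤ ∑ _k : Fin (m + 1), η * K := by
            apply Finset.sum_le_sum
            intro k _
            rw [abs_mul]
            exact mul_le_mul (hc2 (i.succ, k)).le (hc3 k).le (abs_nonneg _) hηpos.le
        _ = δ := by
            simp only [Finset.sum_const, Finset.card_univ, Fintype.card_fin, nsmul_eq_mul]
            push_cast
            rw [hηdef]
            field_simp
    exact absurd hω (not_lt.mpr hδ')
  have hE2b : Pr (⋃ p : Fin (m + 1) × Fin (m + 1), {ω | η ≤ |Cm n ω p.1 p.2|})
      ≤ ENNReal.ofReal (r / 3) :=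
    le_trans (le_trans (measure_iUnion_le _) (le_of_eq (tsum_fintype _))) h2
  have hE3b : Pr (⋃ j : Fin (m + 1), {ω | K ≤ |(Real.sqrt n)⁻¹ * T n ω j|})
      ≤ ENNReal.ofReal (r / 3) :=
    le_trans (le_trans (measure_iUnion_le _) (le_of_eq (tsum_fintype _))) (hev3 n hn)
  refine le_trans (measure_mono hsub) ?_
  refine le_trans (measure_union_le _ _) ?_
  refine le_trans (add_le_add (measure_union_le _ _) (le_refl _)) ?_
  have hsum3 : ENNReal.ofReal (r / 3) + ENNReal.ofReal (r / 3) + ENNReal.ofReal (r / 3) ≤ εe := by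
    have e1 : ENNReal.ofReal (r / 3 + r / 3) = ENNReal.ofReal (r / 3) + ENNReal.ofReal (r / 3) :=
      ENNReal.ofReal_add (by positivity) (by positivity)
    have e2 : ENNReal.ofReal (r / 3 + r / 3 + r / 3)
        = ENNReal.ofReal (r / 3 + r / 3) + ENNReal.ofReal (r / 3) :=
      ENNReal.ofReal_add (by positivity) (by positivity)
    rw [← e1, ← e2]
    exact le_trans (ENNReal.ofReal_le_ofReal (by linarith)) hrε
  exact le_trans (add_le_add (add_le_add h1 hE2b) hE3b) hsum3
end
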